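/- For any natural number u (the number of urelements), the function f_u defined by f_u(x) = x if x is an urelement labeled by a number less than u, and f_u(x) = u + Σ_{a ∈ x} 2^{f_u(a)} if x is a set, is a bijection from the universe of hereditarily finite sets with urelements {0,...,u-1} to ℕ. -/

import Mathlib

inductive PHF (u : ℕ) : Type
  | atom : Fin u → PHF u
  | set : List (PHF u) → PHF u

mutual
  inductive PHF.Eqv {u : ℕ} : PHF u → PHF u → Prop
    | atom (i : Fin u) : PHF.Eqv (.atom i) (.atom i)
    | set {l m : List (PHF u)} :
        PHF.Sub l m → PHF.Sub m l → PHF.Eqv (.set l) (.set m)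

  inductive PHF.Sub {u : ℕ} : List (PHF u) → List (PHF u) → Prop
    | nil (m : List (PHF u)) : PHF.Sub [] m
    | cons {a b : PHF u} {l m : List (PHF u)} :
        PHF.Eqv a b → b ∈ m → PHF.Sub l m → PHF.Sub (a :: l) m
end

mutual
  theorem PHF.eqvRfl {u : ℕ} : ∀ x : PHF u, PHF.Eqv x x
    | .atom i => .atom i
    | .set l => .set (PHF.subOfSubset l l (fun _ h => h)) (PHF.subOfSubset l l (fun _ h => h))
  termination_by x => sizeOf x

  theorem PHF.subOfSubset {u : ℕ} : ∀ l m : List (PHF u), (∀ a ∈ l, a ∈ m) → PHF.Sub l m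
    | [], m, _ => .nil m
    | a :: l, m, h =>
        .cons (PHF.eqvRfl a) (h a List.mem_cons_self)
          (PHF.subOfSubset l m (fun b hb => h b (List.mem_cons_of_mem a hb)))
  termination_by l m _ => sizeOf l
end

theorem PHF.eqvSymm {u : ℕ} {x y : PHF u} (h : PHF.Eqv x y) : PHF.Eqv y x := by
  cases h with
  | atom i => exact .atom i
  | set h1 h2 => exact .set h2 h1

theorem PHF.memSub {u : ℕ} {b : PHF u} :
    ∀ {m n : List (PHF u)}, b ∈ m → PHF.Sub m n → ∃ c ∈ n, PHF.Eqv b c := by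
  intro m
  induction m with
  | nil => intro n hb _; cases hb
  | cons a l ih =>
    intro n hb h
    cases h with
    | cons heq hc hsub =>
      rcases List.mem_cons.mp hb with rfl | hb
      · exact ⟨_, hc, heq⟩
      · exact ih hb hsub

mutual
  theorem PHF.eqvTrans {u : ℕ} : ∀ {x y z : PHF u}, PHF.Eqv x y → PHF.Eqv y z → PHF.Eqv x z
    | _, _, _, .atom _, h2 => h2
    | _, _, _, .set s1 s2, .set t1 t2 => .set (PHF.subTrans s1 t1) (PHF.subTrans t2 s2)

  theorem PHF.subTrans {u : ℕ} :
      ∀ {l m n : List (PHF u)}, PHF.Sub l m → PHF.Sub m n → PHF.Sub l n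
    | _, _, n, .nil _, _ => .nil n
    | _, _, _, .cons hab hb hsub, h2 =>
        let ⟨_, hc, hbc⟩ := PHF.memSub hb h2
        .cons (PHF.eqvTrans hab hbc) hc (PHF.subTrans hsub h2)
end

instance PHF.setoid (u : ℕ) : Setoid (PHF u) :=
  ⟨PHF.Eqv, PHF.eqvRfl, PHF.eqvSymm, PHF.eqvTrans⟩

/-- The universe of hereditarily finite sets with urelements `{0,...,u-1}`:
pre-objects up to extensional equivalence. -/
def HFU (u : ℕ) : Type := Quotient (PHF.setoid u)

/-- The urelement labeled `i`. -/
def HFU.atom {u : ℕ} (i : Fin u) : HFU u := Quotient.mk (PHF.setoid u) (PHF.atom i)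

/-- Membership on pre-objects: atoms have no members; a member of a set is
anything equivalent to one of its listed elements. -/
def PHF.mem {u : ℕ} (a : PHF u) : PHF u → Prop
  | .atom _ => False
  | .set l => ∃ b ∈ l, PHF.Eqv a b

/-- Membership on the quotient. -/
def HFU.Mem {u : ℕ} (a x : HFU u) : Prop :=
  ∃ a' x' : PHF u, Quotient.mk (PHF.setoid u) a' = a ∧
    Quotient.mk (PHF.setoid u) x' = x ∧ PHF.mem a' x'

/-- `x` is a set (i.e. not an urelement). -/
def HFU.IsSet {u : ℕ} (x : HFU u) : Prop :=
  ∃ l : List (PHF u), Quotient.mk (PHF.setoid u) (PHF.set l) = x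

/-! Define the encoding `enc` directly on pre-objects. Since `s ↦ ∑ i ∈ s, 2 ^ i` is a bijection
`Finset ℕ ≃ ℕ` and codes of sets are `≥ u` while codes of urelements are `< u`, a simultaneous
recursion on two pre-objects shows they are extensionally equivalent exactly when their codes
agree; strong induction (the elements of a set have smaller codes, as `i < 2 ^ i`) shows every
number is a code. So `enc` descends to a bijection on `HFU u`, and any `f` obeying the recursion
agrees with it, by induction on pre-objects. -/

theorem List.toFinset_map_subset_toFinset_map_iff {α β : Type*} [DecidableEq β] {g : α → β}
    {l m : List α} : (l.map g).toFinset ⊆ (m.map g).toFinset ↔ ∀ a ∈ l, ∃ b ∈ m, g b = g a := by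
  simp [Finset.subset_iff]

namespace PHF

variable {u : ℕ}

theorem sub_iff_forall_exists_eqv {l m : List (PHF u)} :
    Sub l m ↔ ∀ b ∈ l, ∃ c ∈ m, Eqv b c := by
  refine ⟨fun h _ hb => memSub hb h, fun h => ?_⟩
  induction l with
  | nil => exact .nil m
  | cons a l ih =>
    obtain ⟨c, hc, hac⟩ := h a List.mem_cons_self
    exact .cons hac hc (ih fun b hb => h b (List.mem_cons_of_mem a hb))

theorem eqv_set_iff {l m : List (PHF u)} : Eqv (set l) (set m) ↔ Sub l m ∧ Sub m l :=
  ⟨fun | .set h₁ h₂ => ⟨h₁, h₂⟩, fun ⟨h₁, h₂⟩ => .set h₁ h₂⟩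

def enc : PHF u → ℕ
  | .atom i => i
  | .set l => u + ∑ n ∈ (l.attach.map fun a => enc a.1).toFinset, 2 ^ n
termination_by x => sizeOf x
decreasing_by
  have := List.sizeOf_lt_of_mem a.2
  simp_wf
  omega

theorem enc_atom (i : Fin u) : enc (atom i) = i := by
  rw [enc]

theorem enc_set (l : List (PHF u)) : enc (set l) = u + ∑ n ∈ (l.map enc).toFinset, 2 ^ n := by
  rw [enc, List.map_attach_eq_pmap, List.pmap_eq_map]

theorem enc_atom_lt_enc_set (i : Fin u) (l : List (PHF u)) : enc (atom i) < enc (set l) := by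
  rw [enc_atom, enc_set]
  omega

theorem eqv_iff_enc_eq : ∀ x y : PHF u, Eqv x y ↔ enc x = enc y
  | .atom i, .atom j => by
    rw [enc_atom, enc_atom, Fin.val_inj]
    exact ⟨fun | .atom _ => rfl, fun h => h ▸ .atom i⟩
  | .atom i, .set m => iff_of_false nofun (enc_atom_lt_enc_set i m).ne
  | .set l, .atom j => iff_of_false nofun (enc_atom_lt_enc_set j l).ne'
  | .set l, .set m => by
    rw [eqv_set_iff, sub_iff_forall_exists_eqv, sub_iff_forall_exists_eqv, enc_set, enc_set,
      add_right_inj, (Finset.geomSum_injective le_rfl).eq_iff, Finset.Subset.antisymm_iff,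
      List.toFinset_map_subset_toFinset_map_iff, List.toFinset_map_subset_toFinset_map_iff]
    exact and_congr
      (forall₂_congr fun b hb => exists_congr fun c => and_congr_right fun hc =>
        (eqv_iff_enc_eq b c).trans eq_comm)
      (forall₂_congr fun c hc => exists_congr fun b => and_congr_right fun hb =>
        (eqv_iff_enc_eq c b).trans eq_comm)
termination_by x y => sizeOf x + sizeOf y
decreasing_by
  all_goals
    have := List.sizeOf_lt_of_mem ‹b ∈ l›
    have := List.sizeOf_lt_of_mem ‹c ∈ m›
    simp_wf
    omega

theorem enc_surjective : Function.Surjective (enc : PHF u → ℕ) := by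
  intro n
  induction n using Nat.strong_induction_on with
  | _ n ih =>
  rcases lt_or_ge n u with hn | hn
  · exact ⟨atom ⟨n, hn⟩, enc_atom _⟩
  obtain ⟨k, rfl⟩ := Nat.exists_eq_add_of_le hn
  have hbits : k.bitIndices ∈ Set.range (List.map (enc : PHF u → ℕ)) := by
    rw [Set.range_list_map]
    intro i hi
    have := Nat.two_pow_le_of_mem_bitIndices hi
    exact ih i (by have := @Nat.lt_two_pow_self i; omega)
  obtain ⟨l, hl⟩ := hbits
  exact ⟨set l, by rw [enc_set, hl, Finset.sum_toFinset_bitIndices_two_pow]⟩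

end PHF

namespace HFU

variable {u : ℕ}

def enc : HFU u → ℕ :=
  Quotient.lift PHF.enc fun x y h => (PHF.eqv_iff_enc_eq x y).1 h

theorem enc_bijective : Function.Bijective (enc : HFU u → ℕ) := by
  refine ⟨fun x y => ?_, fun n => ?_⟩
  · induction x using Quotient.ind
    induction y using Quotient.ind
    exact fun h => Quotient.sound ((PHF.eqv_iff_enc_eq _ _).2 h)
  · obtain ⟨x, hx⟩ := PHF.enc_surjective n
    exact ⟨⟦x⟧, hx⟩

theorem mem_mk_set_iff {y : HFU u} {l : List (PHF u)} :
    Mem y ⟦PHF.set l⟧ ↔ ∃ b ∈ l, ⟦b⟧ = y := by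
  constructor
  · rintro ⟨a, x, rfl, hx, hax⟩
    cases x with
    | atom i => exact hax.elim
    | set m =>
      obtain ⟨b, hb, hab⟩ := hax
      obtain ⟨c, hc, hbc⟩ := PHF.memSub hb (PHF.eqv_set_iff.1 (Quotient.exact hx)).1
      exact ⟨c, hc, Quotient.sound (PHF.eqvSymm (PHF.eqvTrans hab hbc))⟩
  · rintro ⟨b, hb, rfl⟩
    exact ⟨b, .set l, rfl, rfl, b, hb, PHF.eqvRfl b⟩

section Recursion

variable (f : HFU u → ℕ) (hatom : ∀ i : Fin u, f (HFU.atom i) = (i : ℕ))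
  (hset : ∀ x : HFU u, x.IsSet → ∀ s : Finset (HFU u),
    (∀ y : HFU u, y ∈ s ↔ HFU.Mem y x) → f x = u + ∑ a ∈ s, 2 ^ f a)
include hatom hset

theorem apply_mk_eq_enc : ∀ x : PHF u, f ⟦x⟧ = x.enc
  | .atom i => (hatom i).trans (PHF.enc_atom i).symm
  | .set l => by
    classical
    -- `(α := HFU u)` makes `toFinset` use the instance that lemmas about `HFU u` synthesize,
    -- not `Quotient.decidableEq`.
    let s : Finset (HFU u) := List.toFinset (α := HFU u) (l.map fun b => ⟦b⟧)
    have mem_s : ∀ y, y ∈ s ↔ ∃ b ∈ l, ⟦b⟧ = y := fun _ => List.mem_toFinset.trans List.mem_map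
    have image_s : s.image enc = (l.map PHF.enc).toFinset := by
      ext n
      simp only [Finset.mem_image, mem_s, List.mem_toFinset, List.mem_map]
      constructor
      · rintro ⟨_, ⟨b, hb, rfl⟩, rfl⟩
        exact ⟨b, hb, rfl⟩
      · rintro ⟨b, hb, rfl⟩
        exact ⟨_, ⟨b, hb, rfl⟩, rfl⟩
    have ih : ∀ a ∈ s, f a = enc a := by
      simp only [mem_s, forall_exists_index, and_imp]
      rintro _ b hb rfl
      exact apply_mk_eq_enc b
    rw [hset _ ⟨l, rfl⟩ s fun y => (mem_s y).trans mem_mk_set_iff.symm, PHF.enc_set, ← image_s,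
      Finset.sum_image fun a _ b _ h => enc_bijective.1 h, Finset.sum_congr rfl fun a ha => by rw [ih a ha]]
termination_by x => sizeOf x
decreasing_by
  have := List.sizeOf_lt_of_mem ‹b ∈ l›
  simp_wf
  omega

theorem eq_enc : f = enc :=
  funext fun x => Quotient.inductionOn x (apply_mk_eq_enc f hatom hset)

end Recursion

end HFU

/-- Ackermann's encoding with `u` urelements: any `f` with `f(i) = i` on urelements
and `f(x) = u + Σ_{a ∈ x} 2 ^ f(a)` on sets (the sum ranging over a `Finset`
enumerating exactly the members of `x`) is a bijection from the universe of
hereditarily finite sets with urelements `{0,...,u-1}` to `ℕ`. -/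
theorem ackermann_urelements_bijective (u : ℕ) (f : HFU u → ℕ)
    (hatom : ∀ i : Fin u, f (HFU.atom i) = (i : ℕ))
    (hset : ∀ x : HFU u, x.IsSet → ∀ s : Finset (HFU u),
      (∀ y : HFU u, y ∈ s ↔ HFU.Mem y x) → f x = u + ∑ a ∈ s, 2 ^ f a) :
    Function.Bijective f :=
  HFU.eq_enc f hatom hset ▸ HFU.enc_bijective
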